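/- All orientations of a tree are related by iterated sink/source reflections: for any finite tree G and any two orientations of its edges, one orientation can be transformed into the other by a sequence of reflections, where a reflection at a sink or source vertex reverses all edges incident to that vertex. -/

import Mathlib

/-!
Give each orientation `o` a height function `h : V → ℤ` rising by one along every arrow; on a
tree one is the signed length of the path from a fixed root, and it determines `o`. Reflecting
at a sink `v` is recorded by lowering `h v` by two. Heights of two orientations differ by a
function of constant parity, so after a shift `h₂ ≤ h₁` with even differences. If `h₁ ≠ h₂`,
a vertex maximising `h₁` among those with `h₂ v < h₁ v` is a sink of `o₁` (an arrow out of it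
would lead to a higher such vertex), and reflecting there decreases `∑ (h₁ - h₂)` by two.
-/

/-- An orientation of a simple graph `G`: a relation supported on edges of `G`,
choosing exactly one direction for each edge. -/
def IsOrientation {V : Type*} (G : SimpleGraph V) (o : V → V → Prop) : Prop :=
  (∀ u v, o u v → G.Adj u v) ∧ (∀ u v, G.Adj u v → (o u v ↔ ¬ o v u))

/-- Reversing all edges incident to the vertex `v`. -/
def reflectAt {V : Type*} (o : V → V → Prop) (v : V) : V → V → Prop :=
  fun u w => ((u = v ∨ w = v) ∧ o w u) ∨ (¬(u = v ∨ w = v) ∧ o u w)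

/-- One sink/source reflection move: reflect at a vertex which is a sink
(all incident edges point in) or a source (all incident edges point out). -/
def ReflectionStep {V : Type*} (G : SimpleGraph V) (o o' : V → V → Prop) : Prop :=
  ∃ v : V, ((∀ u, G.Adj u v → o u v) ∨ (∀ u, G.Adj u v → o v u)) ∧ o' = reflectAt o v

open SimpleGraph

section

variable {V : Type*} {G : SimpleGraph V} {o o₁ o₂ : V → V → Prop}

namespace IsOrientation

theorem adj (ho : IsOrientation G o) {u w : V} (h : o u w) : G.Adj u w := ho.1 u w h

theorem not_symm (ho : IsOrientation G o) {u w : V} (h : o u w) : ¬ o w u :=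
  (ho.2 u w (ho.adj h)).1 h

theorem or_of_adj (ho : IsOrientation G o) {u w : V} (h : G.Adj u w) : o u w ∨ o w u :=
  or_iff_not_imp_right.2 (ho.2 u w h).2

theorem reflectAt (ho : IsOrientation G o) (v : V) : IsOrientation G (reflectAt o v) := by
  refine ⟨fun u w h => ?_, fun u w hadj => ?_⟩
  · rcases h with ⟨-, h⟩ | ⟨-, h⟩
    exacts [(ho.adj h).symm, ho.adj h]
  · have := ho.2 u w hadj
    have := ho.2 w u hadj.symm
    unfold _root_.reflectAt
    by_cases hu : u = v <;> by_cases hw : w = v <;> subst_vars <;> simp_all [hadj.ne]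

end IsOrientation

def IsHeight (o : V → V → Prop) (h : V → ℤ) : Prop :=
  ∀ ⦃u w : V⦄, o u w → h w = h u + 1

namespace IsHeight

variable {h h₁ h₂ : V → ℤ}

theorem add_const (hh : IsHeight o h) (c : ℤ) : IsHeight o (fun v => h v + c) :=
  fun u w huw => by simp only [hh huw]; ring

theorem eq_add_one_or_eq_sub_one (hh : IsHeight o h) (ho : IsOrientation G o) {u w : V}
    (hadj : G.Adj u w) : h w = h u + 1 ∨ h w = h u - 1 := by
  rcases ho.or_of_adj hadj with huw | hwu
  · exact .inl (hh huw)
  · have := hh hwu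
    exact .inr (by omega)

theorem imp_of_isHeight (hh₁ : IsHeight o₁ h) (hh₂ : IsHeight o₂ h)
    (ho₁ : IsOrientation G o₁) (ho₂ : IsOrientation G o₂) {u w : V} (huw : o₁ u w) :
    o₂ u w := by
  by_contra hn
  have hwu : o₂ w u := (ho₂.2 w u (ho₁.adj huw).symm).2 hn
  have := hh₁ huw
  have := hh₂ hwu
  omega

theorem orientation_eq (hh₁ : IsHeight o₁ h) (hh₂ : IsHeight o₂ h)
    (ho₁ : IsOrientation G o₁) (ho₂ : IsOrientation G o₂) : o₁ = o₂ :=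
  funext fun _ => funext fun _ => propext
    ⟨hh₁.imp_of_isHeight hh₂ ho₁ ho₂, hh₂.imp_of_isHeight hh₁ ho₂ ho₁⟩

theorem reflectAt_of_sink [DecidableEq V] (hh : IsHeight o h) (ho : IsOrientation G o) {v : V}
    (hsink : ∀ u, G.Adj u v → o u v) :
    IsHeight (reflectAt o v) (Function.update h v (h v - 2)) := by
  rintro u w (⟨rfl | rfl, hwu⟩ | ⟨huw, hwu⟩)
  · have hwv : w ≠ u := (ho.adj hwu).ne
    have := hh hwu
    simp only [Function.update_self, Function.update_of_ne hwv]
    omega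
  · exact absurd (hsink u (ho.adj hwu).symm) (ho.not_symm hwu)
  · obtain ⟨hu, hw⟩ := not_or.1 huw
    simp only [Function.update_of_ne hu, Function.update_of_ne hw]
    exact hh hwu

theorem even_sub_sub_of_reachable (hh₁ : IsHeight o₁ h₁) (hh₂ : IsHeight o₂ h₂)
    (ho₁ : IsOrientation G o₁) (ho₂ : IsOrientation G o₂) {u w : V} (hr : G.Reachable u w) :
    Even (h₁ u - h₂ u - (h₁ w - h₂ w)) := by
  obtain ⟨p⟩ := hr
  induction p with
  | nil => simp
  | cons hadj _ ih =>
    rw [Int.even_iff] at ih ⊢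
    rcases hh₁.eq_add_one_or_eq_sub_one ho₁ hadj with h1 | h1 <;>
      rcases hh₂.eq_add_one_or_eq_sub_one ho₂ hadj with h2 | h2 <;> omega

theorem exists_sink [Fintype V] (hh₁ : IsHeight o₁ h₁) (hh₂ : IsHeight o₂ h₂)
    (ho₁ : IsOrientation G o₁) (ho₂ : IsOrientation G o₂)
    (hlt : ∃ v, h₂ v < h₁ v) : ∃ v, h₂ v < h₁ v ∧ ∀ u, G.Adj u v → o₁ u v := by
  classical
  obtain ⟨v, hv, hmax⟩ := Finset.exists_max_image {v | h₂ v < h₁ v} h₁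
    (by simpa [Finset.Nonempty] using hlt)
  rw [Finset.mem_filter_univ] at hv
  refine ⟨v, hv, fun u hadj => (ho₁.or_of_adj hadj).resolve_right fun hvu => ?_⟩
  have h1 := hh₁ hvu
  have h2 := hh₂.eq_add_one_or_eq_sub_one ho₂ hadj.symm
  have := hmax u (by rw [Finset.mem_filter_univ]; omega)
  omega

end IsHeight

namespace SimpleGraph.Walk

def signedLength (o : V → V → Prop) [DecidableRel o] {u w : V} (p : G.Walk u w) : ℤ :=
  (p.darts.map fun d => if o d.fst d.snd then 1 else -1).sum

theorem signedLength_concat [DecidableRel o] {u v w : V} (p : G.Walk u v) (hadj : G.Adj v w) :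
    (p.concat hadj).signedLength o = p.signedLength o + if o v w then 1 else -1 := by
  simp [signedLength, darts_concat]

end SimpleGraph.Walk

theorem SimpleGraph.IsTree.exists_isHeight (hG : G.IsTree) (ho : IsOrientation G o) :
    ∃ h : V → ℤ, IsHeight o h := by
  classical
  obtain ⟨r⟩ := hG.connected.nonempty
  let P : ∀ v, G.Path r v := fun v => (hG.connected.preconnected r v).some.toPath
  refine ⟨fun v => (P v : G.Walk r v).signedLength o, fun u w huw => ?_⟩
  have hadj := ho.adj huw
  beta_reduce
  by_cases hw : w ∈ (P u : G.Walk r u).support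
  · rw [hG.isAcyclic.path_concat (P w).2 (P u).2 hadj.symm hw, Walk.signedLength_concat,
      if_neg (ho.not_symm huw)]
    ring
  · have hu := hG.isAcyclic.mem_support_of_ne_mem_support_of_adj_of_isPath (P w).2 (P u).2
      hadj.symm hw
    rw [hG.isAcyclic.path_concat (P u).2 (P w).2 hadj hu, Walk.signedLength_concat, if_pos huw]

theorem reflTransGen_of_isHeight_le [Fintype V] {o₁ o₂ : V → V → Prop} {h₁ h₂ : V → ℤ}
    (hh₁ : IsHeight o₁ h₁) (hh₂ : IsHeight o₂ h₂)
    (ho₁ : IsOrientation G o₁) (ho₂ : IsOrientation G o₂)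
    (hle : ∀ v, h₂ v ≤ h₁ v) (heven : ∀ v, Even (h₁ v - h₂ v)) :
    Relation.ReflTransGen (ReflectionStep G) o₁ o₂ := by
  classical
  by_cases hlt : ∃ v, h₂ v < h₁ v
  · obtain ⟨v, hv, hsink⟩ := hh₁.exists_sink hh₂ ho₁ ho₂ hlt
    have hv2 : h₂ v + 2 ≤ h₁ v := by
      obtain ⟨k, hk⟩ := heven v
      omega
    refine .head ⟨v, .inl hsink, rfl⟩ (reflTransGen_of_isHeight_le
      (hh₁.reflectAt_of_sink ho₁ hsink) hh₂ (ho₁.reflectAt v) ho₂ (fun w => ?_) (fun w => ?_))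
    · rcases eq_or_ne w v with rfl | hw
      · simp only [Function.update_self]
        omega
      · simpa [hw] using hle w
    · rcases eq_or_ne w v with rfl | hw
      · simpa [Int.even_sub] using heven w
      · simpa [hw] using heven w
  · simp only [not_exists, not_lt] at hlt
    obtain rfl : h₁ = h₂ := funext fun v => le_antisymm (hlt v) (hle v)
    rw [hh₁.orientation_eq hh₂ ho₁ ho₂]
termination_by ∑ v, (h₁ v - h₂ v).toNat
decreasing_by
  refine Finset.sum_lt_sum (fun w _ => ?_) ⟨v, Finset.mem_univ v, ?_⟩
  · rcases eq_or_ne w v with rfl | hw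
    · simp only [Function.update_self]; omega
    · simp [hw]
  · simp only [Function.update_self]; omega

end

theorem tree_orientations_reflection_transitive {V : Type*} [Fintype V]
    (G : SimpleGraph V) (hG : G.IsTree)
    (o₁ o₂ : V → V → Prop) (h₁ : IsOrientation G o₁) (h₂ : IsOrientation G o₂) :
    Relation.ReflTransGen (ReflectionStep G) o₁ o₂ := by
  obtain ⟨f₁, hf₁⟩ := hG.exists_isHeight h₁
  obtain ⟨f₂, hf₂⟩ := hG.exists_isHeight h₂
  have : Nonempty V := hG.connected.nonempty
  obtain ⟨v₀, -, hmin⟩ := Finset.univ.exists_min_image (fun v => f₁ v - f₂ v) Finset.univ_nonempty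
  refine reflTransGen_of_isHeight_le hf₁ (hf₂.add_const (f₁ v₀ - f₂ v₀)) h₁ h₂
    (fun v => ?_) (fun v => ?_)
  · linarith [hmin v (Finset.mem_univ v)]
  · convert hf₁.even_sub_sub_of_reachable hf₂ h₁ h₂ (hG.connected.preconnected v v₀) using 1
    ring
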